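/- Let f : ℝ₊ × X → X be a continuous semiflow on a Polish space X. If there exists a point x̂ ∈ X whose minimal center of attraction C_{x̂} equals all of X, then the set {x ∈ X : C_x = X} is residual in X (i.e., contains a dense G_δ set). -/

import Mathlib

open MeasureTheory Filter Metric Set Topology
open scoped Classical

noncomputable section

/-- The set `S ⊆ ℝ` has density `α` in `[0,∞)`. -/
def HasDens (S : Set ℝ) (α : ℝ) : Prop :=
  Filter.Tendsto (fun T : ℝ => (MeasureTheory.volume (S ∩ Set.Icc 0 T)).toReal / T)
    Filter.atTop (nhds α)

/-- `f` is a continuous semiflow on `X` (time in `[0,∞)`). -/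
def IsSemiflow {X : Type*} [MetricSpace X] (f : ℝ → X → X) : Prop :=
  ContinuousOn (fun p : ℝ × X => f p.1 p.2) (Set.Ici 0 ×ˢ Set.univ) ∧
  (∀ x : X, f 0 x = x) ∧
  (∀ s t : ℝ, 0 ≤ s → 0 ≤ t → ∀ x : X, f s (f t x) = f (s + t) x)

/-- `C` is a center of attraction of the motion `f (t, x)`. -/
def IsCtr {X : Type*} [MetricSpace X] (f : ℝ → X → X) (x : X) (C : Set X) : Prop :=
  IsClosed C ∧ ∀ ε > (0 : ℝ), HasDens {t : ℝ | 0 ≤ t ∧ f t x ∈ Metric.thickening ε C} 1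

/-- `C` is the minimal center of attraction of the motion `f (t, x)`. -/
def IsMCA {X : Type*} [MetricSpace X] (f : ℝ → X → X) (x : X) (C : Set X) : Prop :=
  IsCtr f x C ∧ ∀ C' ⊆ C, IsCtr f x C' → C' = C

/-!
If `C_x̂ = X`, the orbit of `x̂` is dense and `x̂` spends a positive upper density of time in
every nonempty open set `U`; conversely, a point with the latter property has `C_x = X`, since a
proper closed center misses some ball, and the time spent in that ball would have density `0`.
Fix a countable basis and, for each basic `U`, a rate `ε_U` for `x̂`. The points that spend more
than `ε_U T / 2` of the time `[0, T]` in `U` for arbitrarily large `T` form a `G_δ` set: the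
occupation time is lower semicontinuous in the initial point. It contains the whole orbit of `x̂`,
because moving along the orbit changes occupation times by a bounded amount, so it is dense.
-/

def volUpTo (S : Set ℝ) (T : ℝ) : ℝ :=
  (volume (S ∩ Icc 0 T)).toReal

lemma volume_inter_Icc_ne_top (S : Set ℝ) (T : ℝ) : volume (S ∩ Icc 0 T) ≠ ⊤ :=
  ((measure_mono inter_subset_right).trans_lt measure_Icc_lt_top).ne

lemma volUpTo_nonneg (S : Set ℝ) (T : ℝ) : 0 ≤ volUpTo S T :=
  ENNReal.toReal_nonneg

lemma volUpTo_mono {S S' : Set ℝ} (h : S ⊆ S') (T : ℝ) : volUpTo S T ≤ volUpTo S' T :=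
  ENNReal.toReal_mono (volume_inter_Icc_ne_top S' T) (measure_mono (inter_subset_inter_left _ h))

lemma volUpTo_Ici_zero {T : ℝ} (hT : 0 ≤ T) : volUpTo (Ici 0) T = T := by
  rw [volUpTo, inter_eq_right.2 Icc_subset_Ici_self, Real.volume_Icc, sub_zero,
    ENNReal.toReal_ofReal hT]

lemma volUpTo_le (S : Set ℝ) {T : ℝ} (hT : 0 ≤ T) : volUpTo S T ≤ T :=
  ENNReal.toReal_le_of_le_ofReal hT <| (measure_mono inter_subset_right).trans_eq <| by
    rw [Real.volume_Icc, sub_zero]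

lemma volUpTo_Ici_diff {S : Set ℝ} (hS : MeasurableSet S) {T : ℝ} (hT : 0 ≤ T) :
    volUpTo (Ici 0 \ S) T = T - volUpTo S T := by
  have hset : (Ici 0 \ S) ∩ Icc 0 T = Icc 0 T \ (S ∩ Icc 0 T) := by
    ext t; simp only [mem_inter_iff, Set.mem_sdiff, mem_Ici, mem_Icc]; tauto
  rw [volUpTo, hset, measure_sdiff inter_subset_right (hS.inter measurableSet_Icc).nullMeasurableSet
    (volume_inter_Icc_ne_top S T), ENNReal.toReal_sub_of_le (measure_mono inter_subset_right)
    measure_Icc_lt_top.ne, Real.volume_Icc, sub_zero, ENNReal.toReal_ofReal hT, volUpTo]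

lemma hasDens_iff {S : Set ℝ} {α : ℝ} :
    HasDens S α ↔ Tendsto (fun T => volUpTo S T / T) atTop (𝓝 α) :=
  Iff.rfl

lemma hasDens_Ici_zero : HasDens (Ici 0) 1 :=
  hasDens_iff.2 <| tendsto_const_nhds.congr' <| (eventually_gt_atTop 0).mono fun T hT => by
    dsimp only
    rw [volUpTo_Ici_zero hT.le, div_self hT.ne']

lemma HasDens.one_of_subset {S S' : Set ℝ} (h : HasDens S 1) (hS : S ⊆ S') : HasDens S' 1 :=
  tendsto_of_tendsto_of_tendsto_of_le_of_le' h tendsto_const_nhds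
    ((eventually_ge_atTop 0).mono fun _ hT => div_le_div_of_nonneg_right (volUpTo_mono hS _) hT)
    ((eventually_gt_atTop 0).mono fun _ hT => (div_le_one hT).2 (volUpTo_le S' hT.le))

lemma HasDens.zero_of_subset {S S' : Set ℝ} (h : HasDens S' 0) (hS : S ⊆ S') : HasDens S 0 :=
  tendsto_of_tendsto_of_tendsto_of_le_of_le' tendsto_const_nhds h
    ((eventually_ge_atTop 0).mono fun _ hT => div_nonneg (volUpTo_nonneg S _) hT)
    ((eventually_ge_atTop 0).mono fun _ hT => div_le_div_of_nonneg_right (volUpTo_mono hS _) hT)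

lemma HasDens.Ici_diff {S : Set ℝ} {α : ℝ} (h : HasDens S α) (hS : MeasurableSet S) :
    HasDens (Ici 0 \ S) (1 - α) := by
  refine hasDens_iff.2 <| (tendsto_const_nhds.sub (hasDens_iff.1 h)).congr'
    ((eventually_gt_atTop 0).mono fun T hT => ?_)
  dsimp only
  rw [volUpTo_Ici_diff hS hT.le, sub_div, div_self hT.ne']

lemma hasDens_zero_iff {S : Set ℝ} :
    HasDens S 0 ↔ ∀ ε > 0, ∀ᶠ T in atTop, volUpTo S T < ε * T := by
  refine ⟨fun h ε hε => ?_, fun h => tendsto_order.2 ⟨fun a ha => ?_, fun ε hε => ?_⟩⟩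
  · filter_upwards [h.eventually (gt_mem_nhds hε), eventually_gt_atTop 0] with T hlt hT
    exact (div_lt_iff₀ hT).1 hlt
  · filter_upwards [eventually_ge_atTop 0] with T hT
    exact ha.trans_le (div_nonneg (volUpTo_nonneg S T) hT)
  · filter_upwards [h ε hε, eventually_gt_atTop 0] with T hlt hT
    exact (div_lt_iff₀ hT).2 hlt

lemma not_hasDens_zero_iff {S : Set ℝ} :
    ¬ HasDens S 0 ↔ ∃ ε > 0, ∃ᶠ T in atTop, ε * T ≤ volUpTo S T := by
  simp only [hasDens_zero_iff, not_forall, not_eventually, not_lt, exists_prop]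

theorem lowerSemicontinuous_measure_setOf_mem_inter {α X : Type*} [TopologicalSpace α]
    [MeasurableSpace α] [OpensMeasurableSpace α] [TopologicalSpace X] (μ : Measure α)
    [μ.InnerRegular] {Ω : Set (α × X)} (hΩ : IsOpen Ω) {A : Set α} (hA : MeasurableSet A) :
    LowerSemicontinuous fun x => μ ({t | (t, x) ∈ Ω} ∩ A) := by
  intro x c hc
  obtain ⟨K, hKA, hK, hcK⟩ :=
    ((hΩ.preimage (Continuous.prodMk_left x)).measurableSet.inter hA).exists_lt_isCompact hc
  have hKΩ : ∀ᶠ x' in 𝓝 x, ∀ t ∈ K, (t, x') ∈ Ω :=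
    hK.eventually_forall_of_forall_eventually fun t ht =>
      (hΩ.preimage continuous_swap).mem_nhds (hKA ht).1
  filter_upwards [hKΩ] with x' hx'
  exact hcK.trans_le (measure_mono fun t ht => ⟨hx' t ht, (hKA ht).2⟩)

section Semiflow

variable {X : Type*} {f : ℝ → X → X}

def visitTimes (f : ℝ → X → X) (x : X) (U : Set X) : Set ℝ :=
  {t | 0 ≤ t ∧ f t x ∈ U}

lemma visitTimes_mono {U V : Set X} (h : U ⊆ V) (x : X) :
    visitTimes f x U ⊆ visitTimes f x V :=
  fun _ ht => ⟨ht.1, h ht.2⟩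

lemma visitTimes_eq_Ici_inter (f : ℝ → X → X) (x : X) (U : Set X) :
    visitTimes f x U = Ici 0 ∩ {t | f (max t 0) x ∈ U} := by
  ext t
  constructor
  · rintro ⟨ht, htU⟩
    exact ⟨ht, by rwa [mem_ofPred_eq, max_eq_left ht]⟩
  · rintro ⟨ht, htU⟩
    exact ⟨ht, by rwa [mem_ofPred_eq, max_eq_left ht] at htU⟩

variable [MetricSpace X]

lemma IsSemiflow.continuous_max (hf : IsSemiflow f) :
    Continuous fun p : ℝ × X => f (max p.1 0) p.2 :=
  continuousOn_univ.1 <| hf.1.comp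
    ((continuous_fst.max continuous_const).prodMk continuous_snd).continuousOn
    fun p _ => ⟨le_max_right p.1 0, mem_univ _⟩

lemma IsSemiflow.measurableSet_visitTimes (hf : IsSemiflow f) (x : X) {U : Set X}
    (hU : IsOpen U) : MeasurableSet (visitTimes f x U) := by
  rw [visitTimes_eq_Ici_inter]
  exact measurableSet_Ici.inter
    (hU.preimage (hf.continuous_max.comp (Continuous.prodMk_left x))).measurableSet

lemma IsSemiflow.lowerSemicontinuous_volUpTo_visitTimes (hf : IsSemiflow f) {U : Set X}
    (hU : IsOpen U) (T : ℝ) : LowerSemicontinuous fun x => volUpTo (visitTimes f x U) T := by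
  set Ω := (fun p : ℝ × X => f (max p.1 0) p.2) ⁻¹' U
  have hvol : ∀ x {c : ℝ}, 0 ≤ c → (c < volUpTo (visitTimes f x U) T ↔
      ENNReal.ofReal c < volume ({t | (t, x) ∈ Ω} ∩ Icc 0 T)) := fun x c hc => by
    rw [volUpTo, ← ENNReal.ofReal_lt_iff_lt_toReal hc (volume_inter_Icc_ne_top _ _),
      visitTimes_eq_Ici_inter, inter_comm (Ici 0), inter_assoc,
      inter_eq_right.2 Icc_subset_Ici_self]
    rfl
  intro x c hc
  rcases lt_or_ge c 0 with hc0 | hc0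
  · exact .of_forall fun _ => hc0.trans_le (volUpTo_nonneg _ _)
  · filter_upwards [lowerSemicontinuous_measure_setOf_mem_inter volume
      (hU.preimage hf.continuous_max) measurableSet_Icc x _ ((hvol x hc0).1 hc)] with x' hx'
    exact (hvol x' hc0).2 hx'

lemma IsSemiflow.volUpTo_visitTimes_le (hf : IsSemiflow f) (x : X) (U : Set X) {s : ℝ}
    (hs : 0 ≤ s) (T : ℝ) :
    volUpTo (visitTimes f x U) T ≤ volUpTo (visitTimes f (f s x) U) (T - s) + s := by
  have hsub : visitTimes f x U ∩ Icc 0 T ⊆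
      Icc 0 s ∪ (fun t => t + -s) ⁻¹' (visitTimes f (f s x) U ∩ Icc 0 (T - s)) := by
    rintro t ⟨⟨ht0, htU⟩, -, htT⟩
    rcases le_or_gt t s with hts | hts
    · exact Or.inl ⟨ht0, hts⟩
    · refine Or.inr ⟨⟨by linarith, ?_⟩, by linarith, by linarith⟩
      rwa [hf.2.2 _ _ (by linarith) hs, neg_add_cancel_right]
  have hle : volume (visitTimes f x U ∩ Icc 0 T) ≤
      ENNReal.ofReal s + volume (visitTimes f (f s x) U ∩ Icc 0 (T - s)) :=
    calc _ ≤ _ := measure_mono hsub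
      _ ≤ _ := measure_union_le _ _
      _ = _ := by rw [Real.volume_Icc, sub_zero, measure_preimage_add_right]
  have hle' := ENNReal.toReal_mono (ENNReal.add_ne_top.2 ⟨ENNReal.ofReal_ne_top,
    volume_inter_Icc_ne_top _ _⟩) hle
  rw [ENNReal.toReal_add ENNReal.ofReal_ne_top (volume_inter_Icc_ne_top _ _),
    ENNReal.toReal_ofReal hs] at hle'
  rw [volUpTo, volUpTo]
  linarith

lemma IsSemiflow.frequently_lt_volUpTo_visitTimes (hf : IsSemiflow f) {x : X} {U : Set X}
    {ε s : ℝ} (hε : 0 < ε) (hs : 0 ≤ s)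
    (h : ∃ᶠ T in atTop, ε * T ≤ volUpTo (visitTimes f x U) T) :
    ∃ᶠ T in atTop, ε / 2 * T < volUpTo (visitTimes f (f s x) U) T := by
  refine (tendsto_atTop_add_const_right _ (-s) tendsto_id).frequently
    (h.mp ((eventually_gt_atTop (2 * s / ε)).mono fun T hT hεT => ?_))
  have hshift := hf.volUpTo_visitTimes_le x U hs T
  have hsT := (div_lt_iff₀ hε).1 hT
  rw [id, ← sub_eq_add_neg]
  nlinarith

lemma isCtr_of_forall_mem {x : X} {C : Set X} (hC : IsClosed C)
    (h : ∀ t, 0 ≤ t → f t x ∈ C) : IsCtr f x C :=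
  ⟨hC, fun _ hε => hasDens_Ici_zero.one_of_subset fun t ht =>
    ⟨ht, self_subset_thickening hε C (h t ht)⟩⟩

lemma IsMCA.dense_orbit {x : X} (h : IsMCA f x univ) : Dense ((fun t => f t x) '' Ici 0) :=
  dense_iff_closure_eq.2 <| h.2 _ (subset_univ _) <|
    isCtr_of_forall_mem isClosed_closure fun t ht => subset_closure ⟨t, ht, rfl⟩

theorem IsSemiflow.isMCA_univ_iff (hf : IsSemiflow f) {x : X} :
    IsMCA f x univ ↔ ∀ U, IsOpen U → U.Nonempty → ¬ HasDens (visitTimes f x U) 0 := by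
  refine ⟨fun hx U hU hne hU0 => ?_, fun h => ⟨isCtr_of_forall_mem isClosed_univ
    fun _ _ => mem_univ _, fun C _ hC => eq_univ_of_forall fun y => by_contra fun hy => ?_⟩⟩
  · have hctr : IsCtr f x Uᶜ := by
      refine ⟨hU.isClosed_compl, fun ε hε => ?_⟩
      have hcompl := hU0.Ici_diff (hf.measurableSet_visitTimes x hU)
      rw [sub_zero] at hcompl
      exact hcompl.one_of_subset fun t ⟨ht, htU⟩ =>
        ⟨ht, self_subset_thickening hε _ fun hmem => htU ⟨ht, hmem⟩⟩
    obtain ⟨y, hy⟩ := hne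
    exact eq_univ_iff_forall.1 (hx.2 _ (subset_univ _) hctr) y hy
  · obtain ⟨r, hr, hball⟩ := Metric.isOpen_iff.1 hC.1.isOpen_compl y hy
    have hdisj : visitTimes f x (ball y (r / 2)) ⊆
        Ici 0 \ visitTimes f x (thickening (r / 2) C) := by
      rintro t ⟨ht, hty⟩
      refine ⟨ht, fun ⟨_, htC⟩ => ?_⟩
      obtain ⟨z, hz, hdist⟩ := mem_thickening_iff.1 htC
      refine hball (mem_ball.2 ?_) hz
      linarith [dist_triangle z (f t x) y, dist_comm z (f t x), mem_ball.1 hty]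
    have hcompl := (hC.2 (r / 2) (half_pos hr)).Ici_diff
      (hf.measurableSet_visitTimes x isOpen_thickening)
    rw [sub_self] at hcompl
    exact h _ isOpen_ball ⟨y, mem_ball_self (half_pos hr)⟩ (hcompl.zero_of_subset hdisj)

end Semiflow

theorem sigmund_conjecture_general {X : Type*} [MetricSpace X]
    [TopologicalSpace.SeparableSpace X]
    (f : ℝ → X → X) (hf : IsSemiflow f) (xhat : X) (hxhat : IsMCA f xhat (Set.univ : Set X)) :
    {x : X | IsMCA f x (Set.univ : Set X)} ∈ residual X := by
  obtain ⟨b, hbc, hb0, hb⟩ := TopologicalSpace.exists_countable_basis X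
  have := hbc.to_subtype
  have hrate (U : b) : ∃ ε > 0, ∃ᶠ T in atTop, ε * T ≤ volUpTo (visitTimes f xhat U) T :=
    not_hasDens_zero_iff.1 <| hf.isMCA_univ_iff.1 hxhat U (hb.isOpen U.2) <|
      nonempty_iff_ne_empty.2 fun h => hb0 (h ▸ U.2)
  choose ε hε hfreq using hrate
  let W (U : b) (k : ℕ) : Set X :=
    ⋃ T ≥ (k : ℝ), {x | ε U / 2 * T < volUpTo (visitTimes f x U) T}
  have hW_open (U : b) (k : ℕ) : IsOpen (W U k) :=
    isOpen_biUnion fun T _ =>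
      (hf.lowerSemicontinuous_volUpTo_visitTimes (hb.isOpen U.2) T).isOpen_preimage _
  have hW_dense (U : b) (k : ℕ) : Dense (W U k) := hxhat.dense_orbit.mono <| by
    rintro _ ⟨s, hs, rfl⟩
    obtain ⟨T, hT, hlt⟩ :=
      frequently_atTop.1 (hf.frequently_lt_volUpTo_visitTimes (hε U) hs (hfreq U)) k
    exact mem_biUnion hT hlt
  refine mem_of_superset (countable_iInter_mem.2 fun U => countable_iInter_mem.2 fun k =>
    residual_of_dense_open (hW_open U k) (hW_dense U k)) fun x hx => ?_
  refine hf.isMCA_univ_iff.2 fun V hV ⟨y, hy⟩ hV0 => ?_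
  obtain ⟨U, hUb, -, hUV⟩ := hb.exists_subset_of_mem_open hy hV
  have hxU : ∃ᶠ T in atTop, ε ⟨U, hUb⟩ / 2 * T ≤ volUpTo (visitTimes f x U) T :=
    frequently_atTop.2 fun a => by
      obtain ⟨T, hT, hlt⟩ := mem_iUnion₂.1 (mem_iInter₂.1 hx ⟨U, hUb⟩ ⌈a⌉₊)
      exact ⟨T, (Nat.le_ceil a).trans hT, hlt.le⟩
  exact not_hasDens_zero_iff.2 ⟨_, half_pos (hε _), hxU⟩
    (hV0.zero_of_subset (visitTimes_mono hUV x))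

theorem sigmund_conjecture {X : Type*} [MetricSpace X]
    [TopologicalSpace.SeparableSpace X] [CompleteSpace X]
    (f : ℝ → X → X) (hf : IsSemiflow f) (xhat : X) (hxhat : IsMCA f xhat (Set.univ : Set X)) :
    {x : X | IsMCA f x (Set.univ : Set X)} ∈ residual X :=
  sigmund_conjecture_general f hf xhat hxhat
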